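/- arXiv:1412.2654 — 2 statements merged into one kernel-verified Lean document; each statement's English description precedes it below -/
import Mathlib

section
/- Let R be a commutative noetherian ring, let M and N be R-modules, and let p, q be distinct prime ideals of R. If M satisfies property t(p) and N satisfies property t(q), then Tor_i^R(M,N) = 0 for all i ≥ 0. -/
/-!
Common definitions: property t(p), injective hulls, (C-)Gorenstein injective modules,
(C-)Gorenstein injective / injective / flat dimensions, small support, torsion functor,
Tor and Ext modules, semidualizing and dualizing modules, depth, Cohen-Macaulay rings,
Serre's condition (S₁), Gorenstein local rings, minimal injective resolutions.
-/

universe u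

open CategoryTheory Limits DirectSum

noncomputable section

/-- An `R`-module `S` has property `t(p)`: multiplication by every `r ∉ p` is bijective on `S`,
and every element of `S` is annihilated by a power of `p`. -/
def PropT (R : Type u) [CommRing R] (p : Ideal R) (S : Type u) [AddCommGroup S]
    [Module R S] : Prop :=
  (∀ r : R, r ∉ p → Function.Bijective (fun s : S => r • s)) ∧
  (∀ x : S, ∃ m : ℕ, 0 < m ∧ ∀ a ∈ p ^ m, a • x = 0)

/-- `E` is an injective hull of `N` over `R`: `E` is injective and `N` embeds in `E` as an
essential submodule. -/
def IsInjectiveHull (R : Type u) [CommRing R] (N : Type u) [AddCommGroup N] [Module R N]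
    (E : Type u) [AddCommGroup E] [Module R E] : Prop :=
  Module.Injective R E ∧ ∃ ι : N →ₗ[R] E, Function.Injective ι ∧
    ∀ K : Submodule R E, K ≠ ⊥ → K ⊓ LinearMap.range ι ≠ ⊥

/-- A complete injective resolution: a doubly infinite exact sequence of injective modules
which stays exact after applying `Hom_R(-, I)` for every injective module `I`. -/
structure CompleteInjRes (R : Type u) [CommRing R] where
  E : ℤ → Type u
  [acg : ∀ i, AddCommGroup (E i)]
  [mod : ∀ i, Module R (E i)]
  d : ∀ i, E i →ₗ[R] E (i + 1)
  inj : ∀ i, Module.Injective R (E i)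
  exct : ∀ i, LinearMap.range (d i) = LinearMap.ker (d (i + 1))
  homExact : ∀ (I : Type u) [AddCommGroup I] [Module R I], Module.Injective R I →
    ∀ (i : ℤ) (g : E (i + 1) →ₗ[R] I), g ∘ₗ d i = 0 →
      ∃ h : E (i + 1 + 1) →ₗ[R] I, h ∘ₗ d (i + 1) = g

attribute [instance] CompleteInjRes.acg CompleteInjRes.mod

/-- `G` is a Gorenstein injective `R`-module: it is the image of some map in a complete
injective resolution. -/
def GorensteinInjective (R : Type u) [CommRing R] (G : Type u) [AddCommGroup G]
    [Module R G] : Prop :=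
  ∃ X : CompleteInjRes R, Nonempty (G ≃ₗ[R] LinearMap.range (X.d 0))

/-- A complete `I_C I`-resolution: an exact sequence
`⋯ → Hom(C,I₁) → Hom(C,I₀) → I⁰ → I¹ → ⋯` (terms in nonnegative degrees are injective,
terms in negative degrees are of the form `Hom_R(C, I)` with `I` injective) such that
`Hom_R(Hom_R(C,J), -)` leaves it exact for every injective `R`-module `J`. -/
structure CompleteICIRes (R : Type u) [CommRing R] (C : Type u) [AddCommGroup C]
    [Module R C] where
  X : ℤ → Type u
  [acg : ∀ i, AddCommGroup (X i)]
  [mod : ∀ i, Module R (X i)]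
  d : ∀ i, X i →ₗ[R] X (i + 1)
  exct : ∀ i, LinearMap.range (d i) = LinearMap.ker (d (i + 1))
  injPos : ∀ i : ℤ, 0 ≤ i → Module.Injective R (X i)
  homCInjNeg : ∀ i : ℤ, i < 0 → ∃ (I : Type u) (_ : AddCommGroup I) (_ : Module R I),
    Module.Injective R I ∧ Nonempty (X i ≃ₗ[R] (C →ₗ[R] I))
  homExact : ∀ (J : Type u) [AddCommGroup J] [Module R J], Module.Injective R J →
    ∀ (i : ℤ) (g : (C →ₗ[R] J) →ₗ[R] X (i + 1)), d (i + 1) ∘ₗ g = 0 →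
      ∃ h : (C →ₗ[R] J) →ₗ[R] X i, d i ∘ₗ h = g

attribute [instance] CompleteICIRes.acg CompleteICIRes.mod

/-- `G` is a `C`-Gorenstein injective `R`-module: it is the image of the map
`Hom_R(C, I₀) → I⁰` in some complete `I_C I`-resolution. -/
def CGorensteinInjective (R : Type u) [CommRing R] (C : Type u) [AddCommGroup C] [Module R C]
    (G : Type u) [AddCommGroup G] [Module R G] : Prop :=
  ∃ X : CompleteICIRes R C, Nonempty (G ≃ₗ[R] LinearMap.range (X.d (-1)))

/-- `M` has a `C`-Gorenstein injective coresolution `0 → M → G⁰ → ⋯ → Gⁿ → 0`,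
i.e. `C`-Gorenstein injective dimension at most `n`. -/
def CGidLE (R : Type u) [CommRing R] (C : Type u) [AddCommGroup C] [Module R C] :
    ℕ → ModuleCat.{u} R → Prop
  | 0, M => CGorensteinInjective R C M
  | n + 1, M => ∃ (G : ModuleCat.{u} R), CGorensteinInjective R C G ∧
      ∃ ι : M →ₗ[R] G, Function.Injective ι ∧
        CGidLE R C n (ModuleCat.of R (G ⧸ LinearMap.range ι))

/-- The `C`-Gorenstein injective dimension of `M` (equal to `⊤` if `M` admits no bounded
coresolution by `C`-Gorenstein injective modules). -/
def CGid (R : Type u) [CommRing R] (C : Type u) [AddCommGroup C] [Module R C]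
    (M : Type u) [AddCommGroup M] [Module R M] : ℕ∞ :=
  sInf {n : ℕ∞ | ∃ m : ℕ, (m : ℕ∞) = n ∧ CGidLE R C m (ModuleCat.of R M)}

/-- There exists an exact sequence `0 → N → Gₙ → ⋯ → G₁ → M → 0` in which each `Gᵢ` is
`C`-Gorenstein injective (and `N` is arbitrary). -/
def CGICoresApprox (R : Type u) [CommRing R] (C : Type u) [AddCommGroup C] [Module R C] :
    ℕ → ModuleCat.{u} R → Prop
  | 0, _ => True
  | n + 1, M => ∃ (G : ModuleCat.{u} R), CGorensteinInjective R C G ∧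
      ∃ π : G →ₗ[R] M, Function.Surjective π ∧
        CGICoresApprox R C n (ModuleCat.of R (LinearMap.ker π))

/-- The `a`-torsion submodule `Γ_a(N)` of `N`. -/
def torsionSubmodule (R : Type u) [CommRing R] (a : Ideal R) (N : Type u) [AddCommGroup N]
    [Module R N] : Submodule R N :=
  ⨆ m : ℕ, Submodule.torsionBySet R N ((a ^ m : Ideal R) : Set R)

/-- `Tor_i^R(M, N)`, as an object of `ModuleCat R`. -/
abbrev TorM (R : Type u) [CommRing R] (i : ℕ) (M N : Type u) [AddCommGroup M] [Module R M]
    [AddCommGroup N] [Module R N] : ModuleCat.{u} R :=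
  ((Tor (ModuleCat.{u} R) i).obj (ModuleCat.of R M)).obj (ModuleCat.of R N)

/-- `Ext_R^i(M, N)`, as an object of `ModuleCat R`. -/
abbrev ExtM (R : Type u) [CommRing R] (i : ℕ) (M N : Type u) [AddCommGroup M] [Module R M]
    [AddCommGroup N] [Module R N] : ModuleCat.{u} R :=
  ((Ext R (ModuleCat.{u} R) i).obj (Opposite.op (ModuleCat.of R M))).obj (ModuleCat.of R N)

/-- The small support of `M`: primes `p` such that `Tor_i^R(κ(p), M) ≠ 0` for some `i`,
where `κ(p)` is the residue field of `R_p`. -/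
def smallSupport (R : Type u) [CommRing R] (M : Type u) [AddCommGroup M] [Module R M] :
    Set (PrimeSpectrum R) :=
  {p | ∃ i : ℕ,
    Nontrivial (TorM R i (IsLocalRing.ResidueField (Localization.AtPrime p.asIdeal)) M)}

/-- `C` is a semidualizing `R`-module: finitely generated, the homothety map
`R → Hom_R(C,C)` is bijective, and `Ext_R^i(C,C) = 0` for `i ≥ 1`. -/
def IsSemidualizing (R : Type u) [CommRing R] (C : Type u) [AddCommGroup C] [Module R C] : Prop :=
  Module.Finite R C ∧
  Function.Bijective (fun r : R => (r • LinearMap.id : C →ₗ[R] C)) ∧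
  ∀ i : ℕ, 1 ≤ i → Subsingleton (ExtM R i C C)

/-- `M` has injective dimension at most `n`. -/
def InjDimLE (R : Type u) [CommRing R] : ℕ → ModuleCat.{u} R → Prop
  | 0, M => Module.Injective R M
  | n + 1, M => ∃ (I : ModuleCat.{u} R), Module.Injective R I ∧
      ∃ ι : M →ₗ[R] I, Function.Injective ι ∧
        InjDimLE R n (ModuleCat.of R (I ⧸ LinearMap.range ι))

/-- `M` has flat dimension at most `n`. -/
def FlatDimLE (R : Type u) [CommRing R] : ℕ → ModuleCat.{u} R → Prop
  | 0, M => Module.Flat R M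
  | n + 1, M => ∃ (F : ModuleCat.{u} R), Module.Flat R F ∧
      ∃ π : F →ₗ[R] M, Function.Surjective π ∧
        FlatDimLE R n (ModuleCat.of R (LinearMap.ker π))

/-- `D` is a dualizing `R`-module: semidualizing of finite injective dimension. -/
def IsDualizing (R : Type u) [CommRing R] (D : Type u) [AddCommGroup D] [Module R D] : Prop :=
  IsSemidualizing R D ∧ ∃ n : ℕ, InjDimLE R n (ModuleCat.of R D)

/-- The depth of a local ring: the supremum of lengths of regular sequences contained in
the maximal ideal. -/
def localRingDepth (A : Type u) [CommRing A] [IsLocalRing A] : ℕ∞ :=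
  sSup {n : ℕ∞ | ∃ rs : List A, (∀ r ∈ rs, r ∈ IsLocalRing.maximalIdeal A) ∧
    RingTheory.Sequence.IsRegular A rs ∧ (rs.length : ℕ∞) = n}

/-- `R` is a Cohen-Macaulay ring: for each prime `p`, `depth (R_p) = dim (R_p)`. -/
def IsCohenMacaulayRing (R : Type u) [CommRing R] : Prop :=
  ∀ (p : Ideal R) (_ : p.IsPrime),
    (localRingDepth (Localization.AtPrime p) : WithBot ℕ∞) =
      ringKrullDim (Localization.AtPrime p)

/-- Serre's condition `(S₁)`: `depth (R_p) ≥ min (ht p, 1)` for every prime `p`. -/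
def SerreS1 (R : Type u) [CommRing R] : Prop :=
  ∀ (p : Ideal R) (hp : p.IsPrime),
    min (Order.height (⟨p, hp⟩ : PrimeSpectrum R)) 1 ≤ localRingDepth (Localization.AtPrime p)

/-- A Gorenstein local ring: a noetherian local ring of finite self-injective dimension. -/
def IsGorensteinLocalRing (A : Type u) [CommRing A] : Prop :=
  IsLocalRing A ∧ IsNoetherianRing A ∧ ∃ n : ℕ, InjDimLE A n (ModuleCat.of A A)

/-- A minimal injective resolution `0 → D → J⁰ → J¹ → ⋯` of `D`: an exact sequence with all
`Jⁱ` injective, in which the kernel of each differential is an essential submodule. -/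
structure MinimalInjRes (R : Type u) [CommRing R] (D : Type u) [AddCommGroup D]
    [Module R D] where
  J : ℕ → Type u
  [acg : ∀ i, AddCommGroup (J i)]
  [mod : ∀ i, Module R (J i)]
  ε : D →ₗ[R] J 0
  d : ∀ i, J i →ₗ[R] J (i + 1)
  inj : ∀ i, Module.Injective R (J i)
  ε_inj : Function.Injective ε
  exct0 : LinearMap.range ε = LinearMap.ker (d 0)
  exct : ∀ i, LinearMap.range (d i) = LinearMap.ker (d (i + 1))
  minimal : ∀ i, ∀ K : Submodule R (J i), K ≠ ⊥ → K ⊓ LinearMap.ker (d i) ≠ ⊥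

attribute [instance] MinimalInjRes.acg MinimalInjRes.mod

end

/-!
Pick `r` in one of `p`, `q` but not in the other.

If `r ∈ p \ q`, then `r` is invertible on `N` and every element of `M` is killed by a power of
`r`. Both properties pass to `Tor_i(M, N)`: the first by functoriality in `N`, the second because
`Tor_i(M, N)` is a subquotient of `M ⊗ P_i` for a projective resolution `P` of `N`. A module on
which `r` is both invertible and locally nilpotent is zero.

If `r ∈ q \ p`, then `r` is invertible on `M`, so `M ⊗ -` factors through localization away
from `r`. Localization is exact, preserves projectives and kills `N`, so `Tor_i(M, N)` is a
derived functor evaluated at `N_r = 0`.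
-/

open TensorProduct MonoidalCategory

section Torsion

variable {R : Type u} [CommRing R] {X Y : Type u} [AddCommGroup X] [Module R X]
  [AddCommGroup Y] [Module R Y]

lemma Module.IsTorsion'.of_injective {S : Submonoid R} {f : X →ₗ[R] Y}
    (hf : Function.Injective f) (hY : Module.IsTorsion' Y S) : Module.IsTorsion' X S := fun x => by
  obtain ⟨a, ha⟩ := @hY (f x)
  exact ⟨a, hf (by rw [LinearMap.map_smul_of_tower, ha, map_zero])⟩

lemma Module.IsTorsion'.of_surjective {S : Submonoid R} {f : X →ₗ[R] Y}
    (hf : Function.Surjective f) (hX : Module.IsTorsion' X S) : Module.IsTorsion' Y S :=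
  fun y => by
    obtain ⟨x, rfl⟩ := hf y
    obtain ⟨a, ha⟩ := @hX x
    exact ⟨a, by rw [← LinearMap.map_smul_of_tower, ha, map_zero]⟩

lemma Module.IsTorsion'.tensorProduct {S : Submonoid R} (hX : Module.IsTorsion' X S) :
    Module.IsTorsion' (X ⊗[R] Y) S := fun t => by
  induction t using TensorProduct.induction_on with
  | zero => exact ⟨1, smul_zero _⟩
  | tmul x y =>
    obtain ⟨a, ha⟩ := @hX x
    exact ⟨a, by rw [Submonoid.smul_def, smul_tmul', ← Submonoid.smul_def, ha, zero_tmul]⟩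
  | add t t' ht ht' =>
    obtain ⟨a, ha⟩ := ht
    obtain ⟨b, hb⟩ := ht'
    exact ⟨a * b, by rw [smul_add, mul_comm, mul_smul, ha, smul_zero, zero_add, mul_comm,
      mul_smul, hb, smul_zero]⟩

lemma CategoryTheory.ShortComplex.isTorsion'_homology {S : Submonoid R}
    (K : ShortComplex (ModuleCat.{u} R)) (h : Module.IsTorsion' K.X₂ S) :
    Module.IsTorsion' K.homology S :=
  (h.of_injective ((ModuleCat.mono_iff_injective K.iCycles).1 inferInstance)).of_surjective
    ((ModuleCat.epi_iff_surjective K.homologyπ).1 inferInstance)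

lemma PropT.isTorsion' {p : Ideal R} (h : PropT R p X) {r : R} (hr : r ∈ p) :
    Module.IsTorsion' X (Submonoid.powers r) := fun x => by
  obtain ⟨m, -, hm⟩ := h.2 x
  exact ⟨⟨r ^ m, m, rfl⟩, hm _ (Ideal.pow_mem_pow hr m)⟩

lemma subsingleton_of_bijective_smul_of_isTorsion' {r : R}
    (hbij : Function.Bijective fun x : X => r • x)
    (htors : Module.IsTorsion' X (Submonoid.powers r)) : Subsingleton X := by
  refine subsingleton_of_forall_eq 0 fun x => ?_
  obtain ⟨⟨_, k, rfl⟩, hk⟩ := @htors x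
  have hk : r ^ k • x = 0 := hk
  exact (hbij.iterate k).injective (by simpa [smul_iterate] using hk)

lemma subsingleton_tensorProduct_of_surjective_smul_of_isTorsion' {r : R}
    (hX : Function.Surjective fun x : X => r • x)
    (hY : Module.IsTorsion' Y (Submonoid.powers r)) : Subsingleton (X ⊗[R] Y) := by
  refine subsingleton_of_forall_eq 0 fun t => ?_
  induction t using TensorProduct.induction_on with
  | zero => rfl
  | tmul x y =>
    obtain ⟨⟨_, k, rfl⟩, hk⟩ := @hY y
    obtain ⟨x, rfl⟩ : ∃ x', r ^ k • x' = x := by simpa [smul_iterate] using hX.iterate k x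
    have hk : r ^ k • y = 0 := hk
    rw [smul_tmul, hk, tmul_zero]
  | add t t' ht ht' => rw [ht, ht', add_zero]

end Torsion

section Localization

variable {R : Type u} [CommRing R] {r : R} {X : Type u} [AddCommGroup X] [Module R X]

lemma isLocalizedModule_powers_id_of_bijective_smul (h : Function.Bijective fun x : X => r • x) :
    IsLocalizedModule (Submonoid.powers r) (LinearMap.id : X →ₗ[R] X) where
  map_units := by
    rintro ⟨_, k, rfl⟩
    have hr : IsUnit (algebraMap R (Module.End R X) r) := (Module.End.isUnit_iff _).2 h
    simpa using hr.pow k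
  surj x := ⟨(x, 1), by simp⟩
  exists_of_eq hx := ⟨1, congr_arg _ hx⟩

lemma bijective_tensorProductMk_one_of_bijective_smul (h : Function.Bijective fun x : X => r • x) :
    Function.Bijective (TensorProduct.mk R (Localization.Away r) X 1) := by
  have := isLocalizedModule_powers_id_of_bijective_smul h
  have key : ⇑(TensorProduct.mk R (Localization.Away r) X 1) =
      IsLocalizedModule.linearEquiv (Submonoid.powers r) LinearMap.id
        (TensorProduct.mk R (Localization.Away r) X 1) :=
    funext fun x => (IsLocalizedModule.linearEquiv_apply _ _ _ x).symm
  rw [key]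
  exact LinearEquiv.bijective _

lemma bijective_smul_tensorProduct_of_bijective_smul (Y : Type u) [AddCommGroup Y] [Module R Y]
    (h : Function.Bijective fun x : X => r • x) :
    Function.Bijective fun t : X ⊗[R] Y => r • t := by
  have key : (fun t : X ⊗[R] Y => r • t) =
      LinearEquiv.rTensor Y (LinearEquiv.ofBijective (LinearMap.lsmul R X r) h) := by
    ext t
    induction t using TensorProduct.induction_on with
    | zero => simp
    | tmul x y => rfl
    | add t t' ht ht' => simp_all [smul_add]
  rw [key]
  exact LinearEquiv.bijective _

end Localization

section DerivedFunctors

lemma HomologicalComplex.homologyMap_smul {R C ι : Type*} [Semiring R] [Category C]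
    [Preadditive C] [Linear R C] {c : ComplexShape ι} {K L : HomologicalComplex C c} (φ : K ⟶ L)
    (a : R) (i : ι) [K.HasHomology i] [L.HasHomology i] :
    homologyMap (a • φ) i = a • homologyMap φ i :=
  ShortComplex.homologyMap_smul ((shortComplexFunctor C c i).map φ) a

variable {C D E : Type*} [Category C] [Abelian C] [HasProjectiveResolutions C] [Category D]
  [Abelian D] [Category E] [Abelian E]

lemma CategoryTheory.Functor.leftDerived_map_smul {R : Type*} [Semiring R]
    [CategoryTheory.Linear R C] [CategoryTheory.Linear R D] (F : C ⥤ D) [F.Additive] [F.Linear R]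
    (n : ℕ) {X Y : C} (a : R) (f : X ⟶ Y) :
    (F.leftDerived n).map (a • f) = a • (F.leftDerived n).map f := by
  let P := projectiveResolution X
  let Q := projectiveResolution Y
  let g := ProjectiveResolution.lift f P Q
  have hg := ProjectiveResolution.lift_commutes_zero f P Q
  rw [← cancel_mono (Q.isoLeftDerivedObj F n).hom, Linear.smul_comp,
    ProjectiveResolution.isoLeftDerivedObj_hom_naturality f P Q g hg,
    ProjectiveResolution.isoLeftDerivedObj_hom_naturality (a • f) P Q (a • g)
      ((Linear.smul_comp _ _ _ _ _ _).trans
        ((congrArg (a • ·) hg).trans (Linear.comp_smul _ _ _ _ _ _).symm))]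
  simp only [Functor.comp_map, Functor.map_smul, HomologicalComplex.homologyFunctor_map,
    HomologicalComplex.homologyMap_smul]
  exact Linear.comp_smul _ _ _ _ _ _

lemma CategoryTheory.Functor.isZero_leftDerived_obj_of_isZero (G : C ⥤ D) [G.Additive] {Y : C}
    (hY : IsZero Y) (n : ℕ) : IsZero ((G.leftDerived n).obj Y) := by
  have := hY.projective
  refine IsZero.of_iso ?_ ((ProjectiveResolution.self Y).isoLeftDerivedObj G n)
  refine (HomologicalComplex.exactAt_iff_isZero_homology _ n).1
    (ShortComplex.exact_of_isZero_X₂ _ (G.map_isZero ?_))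
  rcases n with _ | n
  · exact hY
  · exact isZero_zero _

lemma CategoryTheory.Functor.isZero_leftDerived_obj_of_iso_comp [HasProjectiveResolutions D]
    {H : C ⥤ E} {F : C ⥤ D} {G : D ⥤ E} [H.Additive] [F.Additive] [G.Additive]
    [F.PreservesProjectiveObjects] [F.PreservesHomology] (e : H ≅ F ⋙ G) {X : C}
    (hX : IsZero (F.obj X)) (n : ℕ) : IsZero ((H.leftDerived n).obj X) := by
  let P := projectiveResolution X
  exact IsZero.of_iso (G.isZero_leftDerived_obj_of_isZero hX n)
    (P.isoLeftDerivedObj H n ≪≫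
      (HomologicalComplex.homologyFunctor _ _ n).mapIso
        ((NatIso.mapHomologicalComplex e _).app P.complex) ≪≫
      ((F.mapProjectiveResolution P).isoLeftDerivedObj G n).symm)

end DerivedFunctors

namespace ModuleCat

instance extendScalars_additive {R S : Type u} [CommRing R] [CommRing S] (f : R →+* S) :
    (extendScalars.{u, u, u} f).Additive :=
  (extendRestrictScalarsAdj f).left_adjoint_additive

instance extendScalars_preservesProjectiveObjects {R S : Type u} [CommRing R] [CommRing S]
    (f : R →+* S) : (extendScalars.{u, u, u} f).PreservesProjectiveObjects :=
  ⟨fun hP => (extendRestrictScalarsAdj f).map_projective _ hP⟩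

lemma extendScalars_preservesHomology_of_flat {R S : Type u} [CommRing R] [CommRing S]
    {f : R →+* S} (hf : f.Flat) : (extendScalars.{u, u, u} f).PreservesHomology :=
  have := preservesFiniteLimits_extendScalars_of_flat hf
  inferInstance

variable {R : Type u} [CommRing R] {r : R}

lemma isZero_extendScalars_away_of_isTorsion' {N : ModuleCat.{u} R}
    (hN : Module.IsTorsion' N (Submonoid.powers r)) :
    IsZero ((extendScalars.{u, u, u} (algebraMap R (Localization.Away r))).obj N) := by
  rw [isZero_iff_subsingleton]
  refine subsingleton_tensorProduct_of_surjective_smul_of_isTorsion' (fun a => ?_) hN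
  refine ⟨((IsLocalization.Away.algebraMap_isUnit r).unit⁻¹ : (Localization.Away r)ˣ) • a, ?_⟩
  change algebraMap R (Localization.Away r) r • _ = a
  simp only [Units.smul_def, smul_smul, IsUnit.mul_val_inv, one_smul]

/-- Up to `leftComm`, this map is `y ↦ 1 ⊗ y` on `M ⊗ X`, on which `r` acts invertibly. -/
lemma bijective_whiskerLeft_extendRestrictScalarsAdj_unit_app {M : ModuleCat.{u} R}
    (hM : Function.Bijective fun m : M => r • m) (X : ModuleCat.{u} R) :
    Function.Bijective
      (M ◁ (extendRestrictScalarsAdj (algebraMap R (Localization.Away r))).unit.app X) := by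
  let A := (restrictScalars (algebraMap R (Localization.Away r))).obj
    (of _ (Localization.Away r))
  -- `restrictScalars` makes `R_r` an `R`-module through `algebraMap`, which is not reducibly
  -- the algebra's own structure; `e` is the identity between the two.
  let e : Localization.Away r ≃ₗ[R] A :=
    { AddEquiv.refl _ with map_smul' := fun a x => Algebra.smul_def a x }
  have key : (M ◁ (extendRestrictScalarsAdj (algebraMap R (Localization.Away r))).unit.app X).hom =
      (leftComm R A M X).toLinearMap ∘ₗ (e.rTensor (M ⊗[R] X)).toLinearMap ∘ₗ
        TensorProduct.mk R (Localization.Away r) (M ⊗[R] X) 1 :=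
    TensorProduct.ext' fun _ _ => rfl
  change Function.Bijective (M ◁ _).hom
  rw [key]
  exact (leftComm R A M X).bijective.comp ((e.rTensor (M ⊗[R] X)).bijective.comp
    (bijective_tensorProductMk_one_of_bijective_smul
      (bijective_smul_tensorProduct_of_bijective_smul X hM)))

noncomputable def tensorLeftIsoExtendScalarsAway {M : ModuleCat.{u} R}
    (hM : Function.Bijective fun m : M => r • m) :
    (tensoringLeft _).obj M ≅ extendScalars.{u, u, u} (algebraMap R (Localization.Away r)) ⋙
      restrictScalars.{u} (algebraMap R (Localization.Away r)) ⋙ (tensoringLeft _).obj M :=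
  letI η := Functor.whiskerRight (extendRestrictScalarsAdj
    (algebraMap R (Localization.Away r))).unit ((tensoringLeft _).obj M)
  have (X : ModuleCat.{u} R) : IsIso (η.app X) := (ConcreteCategory.isIso_iff_bijective _).2
    (bijective_whiskerLeft_extendRestrictScalarsAdj_unit_app hM X)
  have : IsIso η := NatIso.isIso_of_isIso_app η
  asIso η

end ModuleCat

section Tor

variable {R : Type u} [CommRing R] {r : R} {M N : Type u} [AddCommGroup M] [Module R M]
  [AddCommGroup N] [Module R N]

lemma subsingleton_Tor_of_isTorsion'_of_bijective_smul
    (hM : Module.IsTorsion' M (Submonoid.powers r)) (hN : Function.Bijective fun n : N => r • n)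
    (i : ℕ) : Subsingleton (TorM R i M N) := by
  let F := (tensoringLeft (ModuleCat.{u} R)).obj (ModuleCat.of R M)
  let T := (F.leftDerived i).obj (ModuleCat.of R N)
  change Subsingleton T
  refine subsingleton_of_bijective_smul_of_isTorsion' (r := r) ?_ ?_
  · have : IsIso (r • 𝟙 (ModuleCat.of R N)) := (ConcreteCategory.isIso_iff_bijective _).2 hN
    have : IsIso (r • 𝟙 T) := by
      rw [← CategoryTheory.Functor.map_id, ← Functor.leftDerived_map_smul]
      infer_instance
    exact (ConcreteCategory.isIso_iff_bijective _).1 this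
  · let P := projectiveResolution (ModuleCat.of R N)
    exact (ShortComplex.isTorsion'_homology _ (Module.IsTorsion'.tensorProduct hM)).of_surjective
      (ConcreteCategory.bijective_of_isIso (P.isoLeftDerivedObj F i).inv).2

lemma subsingleton_Tor_of_bijective_smul_of_isTorsion'
    (hM : Function.Bijective fun m : M => r • m) (hN : Module.IsTorsion' N (Submonoid.powers r))
    (i : ℕ) : Subsingleton (TorM R i M N) := by
  have := ModuleCat.extendScalars_preservesHomology_of_flat
    (RingHom.flat_algebraMap_iff.2 (IsLocalization.flat (Localization.Away r) (Submonoid.powers r)))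
  exact ModuleCat.isZero_iff_subsingleton.1 (Functor.isZero_leftDerived_obj_of_iso_comp
    (ModuleCat.tensorLeftIsoExtendScalarsAway (M := ModuleCat.of R M) hM)
    (ModuleCat.isZero_extendScalars_away_of_isTorsion' (N := ModuleCat.of R N) hN) i)

end Tor

theorem statement2_general (R : Type u) [CommRing R]
    (M N : Type u) [AddCommGroup M] [Module R M] [AddCommGroup N] [Module R N]
    (p q : Ideal R) (hpq : p ≠ q)
    (hM : PropT R p M) (hN : PropT R q N) :
    ∀ i : ℕ, Subsingleton (TorM R i M N) := by
  intro i
  by_cases hle : p ≤ q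
  · obtain ⟨r, hrq, hrp⟩ := SetLike.not_le_iff_exists.1 fun h => hpq (le_antisymm hle h)
    exact subsingleton_Tor_of_bijective_smul_of_isTorsion' (hM.1 r hrp) (hN.isTorsion' hrq) i
  · obtain ⟨r, hrp, hrq⟩ := SetLike.not_le_iff_exists.1 hle
    exact subsingleton_Tor_of_isTorsion'_of_bijective_smul (hM.isTorsion' hrp) (hN.1 r hrq) i

/-- If `M` satisfies `t(p)`, `N` satisfies `t(q)` and `p ≠ q`, then
`Tor_i^R(M, N) = 0` for all `i ≥ 0`. -/
theorem statement2 (R : Type u) [CommRing R] [IsNoetherianRing R]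
    (M N : Type u) [AddCommGroup M] [Module R M] [AddCommGroup N] [Module R N]
    (p q : Ideal R) (hp : p.IsPrime) (hq : q.IsPrime) (hpq : p ≠ q)
    (hM : PropT R p M) (hN : PropT R q N) :
    ∀ i : ℕ, Subsingleton (TorM R i M N) :=
  statement2_general R M N p q hpq hM hN
end

section
/- Let R be a commutative noetherian ring satisfying Serre's condition (S_1), let p be a prime ideal of R with ht(p) ≥ 1, and let T be an R-module with property t(p). Then for any Gorenstein injective R-module G one has G ⊗_R T = 0. -/
/-!
Common definitions: property t(p), injective hulls, (C-)Gorenstein injective modules,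
(C-)Gorenstein injective / injective / flat dimensions, small support, torsion functor,
Tor and Ext modules, semidualizing and dualizing modules, depth, Cohen-Macaulay rings,
Serre's condition (S₁), Gorenstein local rings, minimal injective resolutions.
-/

universe u

open CategoryTheory Limits DirectSum

/-!
By `(S₁)` every associated prime of `R` is minimal, so by prime avoidance a prime `p` of positive
height contains a nonzerodivisor `r`. A Gorenstein injective module `G` is a quotient of an
injective module, hence divisible by every nonzerodivisor, while each `t ∈ T` is killed by some
`r ^ m ∈ p ^ m`. Thus `g ⊗ t = r ^ m • g' ⊗ t = g' ⊗ r ^ m • t = 0`.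
-/

lemma localRingDepth_eq_zero_of_maximalIdeal_mem_associatedPrimes (A : Type u) [CommRing A]
    [IsLocalRing A] [IsNoetherianRing A] (h : IsLocalRing.maximalIdeal A ∈ associatedPrimes A A) :
    localRingDepth A = 0 := by
  refine nonpos_iff_eq_zero.mp (sSup_le ?_)
  rintro n ⟨_ | ⟨r, rs⟩, hmem, hreg, rfl⟩
  · rfl
  · have hr : IsSMulRegular A r :=
      ((RingTheory.Sequence.isWeaklyRegular_cons_iff A r rs).mp hreg.toIsWeaklyRegular).1
    have hr' : r ∈ ⋃ P ∈ associatedPrimes A A, (P : Set A) :=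
      Set.mem_biUnion h (hmem r List.mem_cons_self)
    rw [biUnion_associatedPrimes_eq_compl_regular] at hr'
    exact absurd hr hr'

lemma SerreS1.isMin_of_mem_associatedPrimes {R : Type u} [CommRing R] [IsNoetherianRing R]
    (hR : SerreS1 R) {q : Ideal R} (hq : q ∈ associatedPrimes R R) :
    IsMin (⟨q, hq.isPrime⟩ : PrimeSpectrum R) := by
  have := hq.isPrime
  have hmax : IsLocalRing.maximalIdeal (Localization.AtPrime q) ∈
      associatedPrimes (Localization.AtPrime q) (Localization.AtPrime q) :=
    Module.associatedPrimes.mem_associatedPrimes_of_comap_mem_associatedPrimes_of_isLocalizedModule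
      q.primeCompl (Algebra.linearMap R (Localization.AtPrime q)) _
      (by simpa [Localization.AtPrime.under_maximalIdeal] using hq)
  have h := hR q hq.isPrime
  rw [localRingDepth_eq_zero_of_maximalIdeal_mem_associatedPrimes _ hmax, min_le_iff] at h
  rw [← Order.height_eq_zero]
  simpa using h

theorem SerreS1.exists_mem_nonZeroDivisors {R : Type u} [CommRing R] [IsNoetherianRing R]
    (hR : SerreS1 R) (p : Ideal R) (hp : p.IsPrime)
    (hht : 1 ≤ Order.height (⟨p, hp⟩ : PrimeSpectrum R)) :
    ∃ r ∈ p, r ∈ nonZeroDivisors R := by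
  by_contra! h
  obtain ⟨P, hP, hpP⟩ : ∃ P ∈ associatedPrimes R R, p ≤ P :=
    (p.subset_union_prime_finite (associatedPrimes.finite R R) (f := id) 0 0
      fun _ hP _ _ ↦ hP.isPrime).1 <|
      biUnion_associatedPrimes_eq_compl_nonZeroDivisors R ▸ h
  have hheight : Order.height (⟨p, hp⟩ : PrimeSpectrum R) = 0 :=
    Order.height_eq_zero.mpr fun q hq ↦
      hpP.trans (hR.isMin_of_mem_associatedPrimes hP (b := q) (hq.trans hpP))
  simp [hheight] at hht

lemma Module.Injective.smul_surjective {R : Type u} [CommRing R] (E : Type u) [AddCommGroup E]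
    [Module R E] [Module.Injective R E] {r : R} (hr : r ∈ nonZeroDivisors R) :
    Function.Surjective (fun e : E ↦ r • e) := by
  intro e
  obtain ⟨h, hh⟩ := Module.Injective.out (LinearMap.toSpanSingleton R R r)
    (fun x y hxy ↦ (mul_cancel_left_mem_nonZeroDivisors hr).mp (by simpa [mul_comm] using hxy))
    (LinearMap.toSpanSingleton R E e)
  exact ⟨h 1, by simpa [← map_smul] using hh 1⟩

lemma GorensteinInjective.smul_surjective {R : Type u} [CommRing R] {G : Type u}
    [AddCommGroup G] [Module R G] (hG : GorensteinInjective R G) {r : R}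
    (hr : r ∈ nonZeroDivisors R) :
    Function.Surjective (fun g : G ↦ r • g) := by
  obtain ⟨X, ⟨eG⟩⟩ := hG
  have := X.inj 0
  intro g
  obtain ⟨e, he⟩ := (eG g).2
  obtain ⟨e', rfl⟩ := Module.Injective.smul_surjective (X.E 0) hr e
  refine ⟨eG.symm ⟨X.d 0 e', e', rfl⟩, eG.injective ?_⟩
  ext
  simp [← he]

lemma TensorProduct.subsingleton_of_forall_exists_smul_eq_zero {R M N : Type*} [CommRing R]
    [AddCommGroup M] [Module R M] [AddCommGroup N] [Module R N]
    (h : ∀ n : N, ∃ r : R, r • n = 0 ∧ Function.Surjective (fun m : M ↦ r • m)) :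
    Subsingleton (TensorProduct R M N) := by
  refine subsingleton_of_forall_eq 0 fun z ↦ ?_
  induction z using TensorProduct.induction_on with
  | zero => rfl
  | tmul m n =>
    obtain ⟨r, hrn, hr⟩ := h n
    obtain ⟨m', rfl⟩ := hr m
    rw [TensorProduct.smul_tmul, hrn, TensorProduct.tmul_zero]
  | add x y hx hy => rw [hx, hy, add_zero]

/-- Over an `(S₁)` noetherian ring, if `ht p ≥ 1` and `T` satisfies `t(p)`, then
`G ⊗_R T = 0` for every Gorenstein injective module `G`. -/
theorem statement4 (R : Type u) [CommRing R] [IsNoetherianRing R] (hR : SerreS1 R)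
    (p : Ideal R) (hp : p.IsPrime)
    (hht : 1 ≤ Order.height (⟨p, hp⟩ : PrimeSpectrum R))
    (T : Type u) [AddCommGroup T] [Module R T] (hT : PropT R p T)
    (G : Type u) [AddCommGroup G] [Module R G] (hG : GorensteinInjective R G) :
    Subsingleton (TensorProduct R G T) := by
  obtain ⟨r, hrp, hr⟩ := hR.exists_mem_nonZeroDivisors p hp hht
  refine TensorProduct.subsingleton_of_forall_exists_smul_eq_zero fun t ↦ ?_
  obtain ⟨m, -, hm⟩ := hT.2 t
  exact ⟨r ^ m, hm _ (Ideal.pow_mem_pow hrp m),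
    hG.smul_surjective (pow_mem hr m)⟩
end
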